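/- arXiv:2504.05986 — 2 statements merged into one kernel-verified Lean document; each statement's English description precedes it below -/
import Mathlib

section
/- Let $\Omega$ be a bounded convex subset of $\mathbb{R}^n$ and suppose there exist open bounded sets $A_1, \dots, A_N$ covering the closure of $\Omega$ such that for each $j = 1, \dots, N$, Hardy's inequality holds for the bounded set $\Omega \cap A_j$: there is $C_j > 0$ with $\int_{2(\Omega \cap A_j)} |\widehat{g}(x)|/\omega_{\Omega \cap A_j}(x)\,dx \le C_j \|g\|_{L^1}$ for all $g \in L^1(\mathbb{R}^n)$ whose Fourier transform vanishes outside $2(\Omega \cap A_j)$. Then Hardy's inequality holds for $\Omega$: there exists $C > 0$ such that $\int_{2\Omega} |\widehat{f}(x)|/\omega_\Omega(x)\,dx \le C\|f\|_{L^1}$ for all $f \in L^1(\mathbb{R}^n)$ whose Fourier transform vanishes outside $2\Omega$. -/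
open MeasureTheory FourierTransform
open scoped Pointwise

/-- `omegaSet S x = m(S ∩ (x - S))`. -/
noncomputable def omegaSet {n : ℕ} (S : Set (EuclideanSpace ℝ (Fin n)))
    (x : EuclideanSpace ℝ (Fin n)) : ℝ :=
  (volume (S ∩ ((fun y => x - y) '' S))).toReal

/-- Hardy's inequality for the set `S` with constant `C`. -/
def HardyWith {n : ℕ} (S : Set (EuclideanSpace ℝ (Fin n))) (C : ℝ) : Prop :=
  ∀ f : EuclideanSpace ℝ (Fin n) → ℂ, Integrable f →
    (∀ x ∉ (2 : ℝ) • S, 𝓕 f x = 0) →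
    ∫⁻ x in (2 : ℝ) • S, ENNReal.ofReal (‖𝓕 f x‖ / omegaSet S x) ≤
      ENNReal.ofReal (C * ∫ t, ‖f t‖)

open Set Function Bornology
open scoped RealInnerProductSpace Convolution Manifold

variable {V : Type*} [NormedAddCommGroup V] [InnerProductSpace ℝ V]
  [FiniteDimensional ℝ V] [MeasurableSpace V] [BorelSpace V]

/-- A compactly supported smooth function is a Schwartz map. -/
noncomputable def schwartzOfCompact (f : V → ℂ) (hf : ContDiff ℝ ((⊤ : ℕ∞) : WithTop ℕ∞) f)
    (h2 : HasCompactSupport f) : SchwartzMap V ℂ where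
  toFun := f
  smooth' := hf
  decay' := by
    intro k m
    have hg : Continuous fun x => ‖x‖ ^ k * ‖iteratedFDeriv ℝ m f x‖ :=
      ((continuous_norm.pow k).mul
        (hf.continuous_iteratedFDeriv (by exact_mod_cast le_top)).norm)
    have hgc : HasCompactSupport fun x => ‖x‖ ^ k * ‖iteratedFDeriv ℝ m f x‖ :=
      ((h2.iteratedFDeriv m).norm).mul_left
    obtain ⟨C, hC⟩ := hg.bounded_above_of_compact_support hgc
    exact ⟨C, fun x => (le_abs_self _).trans ((Real.norm_eq_abs _ ▸ hC x))⟩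

lemma schwartzOfCompact_apply (f : V → ℂ) (hf : ContDiff ℝ ((⊤ : ℕ∞) : WithTop ℕ∞) f)
    (h2 : HasCompactSupport f) (x : V) : schwartzOfCompact f hf h2 x = f x := rfl

/-- Fourier transform of a convolution is the product of Fourier transforms. -/
lemma fourier_convolution (f g : V → ℂ) (hf : Integrable f) (hg : Integrable g) (ξ : V) :
    𝓕 (f ⋆[ContinuousLinearMap.mul ℂ ℂ] g) ξ = 𝓕 f ξ * 𝓕 g ξ := by
  have hf' : Integrable fun v => 𝐞 (-⟪v, ξ⟫) • f v :=
    (Real.fourierIntegral_convergent_iff ξ).2 hf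
  have hg' : Integrable fun v => 𝐞 (-⟪v, ξ⟫) • g v :=
    (Real.fourierIntegral_convergent_iff ξ).2 hg
  have key : ∀ x : V, 𝐞 (-⟪x, ξ⟫) • (f ⋆[ContinuousLinearMap.mul ℂ ℂ] g) x
      = ((fun v => 𝐞 (-⟪v, ξ⟫) • f v) ⋆[ContinuousLinearMap.mul ℂ ℂ]
          (fun v => 𝐞 (-⟪v, ξ⟫) • g v)) x := by
    intro x
    simp only [convolution_def, ContinuousLinearMap.mul_apply', Circle.smul_def]
    rw [← integral_smul]
    refine integral_congr_ae (Filter.Eventually.of_forall fun t => ?_)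
    have h1 : ((𝐞 (-⟪x, ξ⟫) : Circle) : ℂ) = ((𝐞 (-⟪t, ξ⟫) : Circle) : ℂ) * ((𝐞 (-⟪x - t, ξ⟫) : Circle) : ℂ) := by
      norm_cast
      rw [show -⟪x, ξ⟫ = -⟪t, ξ⟫ + -⟪x - t, ξ⟫ by rw [inner_sub_left]; ring,
        AddChar.map_add_eq_mul]
    simp only [smul_eq_mul]
    rw [h1]
    ring
  calc 𝓕 (f ⋆[ContinuousLinearMap.mul ℂ ℂ] g) ξ
      = ∫ x, ((fun v => 𝐞 (-⟪v, ξ⟫) • f v) ⋆[ContinuousLinearMap.mul ℂ ℂ]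
          (fun v => 𝐞 (-⟪v, ξ⟫) • g v)) x := by
        rw [Real.fourier_eq]
        exact integral_congr_ae (Filter.Eventually.of_forall key)
    _ = 𝓕 f ξ * 𝓕 g ξ := by
        rw [integral_convolution (ContinuousLinearMap.mul ℂ ℂ) hf' hg']
        rfl

/-- L¹ bound for convolution. -/
lemma convolution_L1_le (f g : V → ℂ) (hf : Integrable f) (hg : Integrable g) :
    ∫ x, ‖(f ⋆[ContinuousLinearMap.mul ℂ ℂ] g) x‖ ≤ (∫ x, ‖f x‖) * ∫ x, ‖g x‖ := by
  set F : V → ℝ := fun x => ‖f x‖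
  set G : V → ℝ := fun x => ‖g x‖
  have hF : Integrable F := hf.norm
  have hG : Integrable G := hg.norm
  have hFG : Integrable (F ⋆[ContinuousLinearMap.mul ℝ ℝ] G) :=
    hF.integrable_convolution _ hG
  have hfg : Integrable (f ⋆[ContinuousLinearMap.mul ℂ ℂ] g) :=
    hf.integrable_convolution _ hg
  have hbd : ∀ᵐ x, ‖(f ⋆[ContinuousLinearMap.mul ℂ ℂ] g) x‖
      ≤ (F ⋆[ContinuousLinearMap.mul ℝ ℝ] G) x := by
    filter_upwards [hf.ae_convolution_exists (ContinuousLinearMap.mul ℂ ℂ) hg] with x hx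
    rw [convolution_def, convolution_def]
    refine (norm_integral_le_integral_norm _).trans ?_
    refine le_of_eq (integral_congr_ae (Filter.Eventually.of_forall fun t => ?_))
    simp [F, G, ContinuousLinearMap.mul_apply', norm_mul]
  calc ∫ x, ‖(f ⋆[ContinuousLinearMap.mul ℂ ℂ] g) x‖
      ≤ ∫ x, (F ⋆[ContinuousLinearMap.mul ℝ ℝ] G) x :=
        integral_mono_ae hfg.norm hFG hbd
    _ = (∫ x, ‖f x‖) * ∫ x, ‖g x‖ := by
        rw [integral_convolution (ContinuousLinearMap.mul ℝ ℝ) hF hG]; rfl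


variable {n : ℕ}

lemma image_sub_eq_preimage (x : EuclideanSpace ℝ (Fin n)) (S : Set (EuclideanSpace ℝ (Fin n))) :
    (fun y => x - y) '' S = (fun y => x - y) ⁻¹' S :=
  congrFun (Set.image_eq_preimage_of_inverse (g := fun y => x - y)
    (fun y => sub_sub_cancel x y) (fun y => sub_sub_cancel x y)) S

lemma volume_preimage_sub_null (x : EuclideanSpace ℝ (Fin n))
    {S : Set (EuclideanSpace ℝ (Fin n))} (hS : volume S = 0) :
    volume ((fun y => x - y) ⁻¹' S) = 0 := by
  have h1 : (fun y => x - y) ⁻¹' S ⊆ (fun y => x - y) ⁻¹' (toMeasurable volume S) :=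
    preimage_mono (subset_toMeasurable _ _)
  refine measure_mono_null h1 ?_
  have h2 := (Measure.measurePreserving_sub_left volume x).measure_preimage
    (measurableSet_toMeasurable volume S).nullMeasurableSet
  rw [h2, measure_toMeasurable]
  exact hS

lemma volume_image_sub_null (x : EuclideanSpace ℝ (Fin n))
    {S : Set (EuclideanSpace ℝ (Fin n))} (hS : volume S = 0) :
    volume ((fun y => x - y) '' S) = 0 := by
  rw [image_sub_eq_preimage]; exact volume_preimage_sub_null x hS

lemma omegaSet_mono {S T : Set (EuclideanSpace ℝ (Fin n))} (hST : S ⊆ T)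
    (hT : IsBounded T) (x : EuclideanSpace ℝ (Fin n)) : omegaSet S x ≤ omegaSet T x :=
  ENNReal.toReal_mono
    (ne_of_lt (lt_of_le_of_lt (measure_mono inter_subset_left) hT.measure_lt_top))
    (measure_mono (inter_subset_inter hST (image_mono hST)))

lemma measurable_omegaSet {S : Set (EuclideanSpace ℝ (Fin n))}
    (hS : NullMeasurableSet S volume) : Measurable (omegaSet S) := by
  set T := toMeasurable volume S with hT
  have hTm : MeasurableSet T := measurableSet_toMeasurable _ _
  have hae : S =ᵐ[volume] T := hS.toMeasurable_ae_eq.symm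
  have hkey : ∀ x, volume (S ∩ ((fun y => x - y) '' S)) = volume (T ∩ ((fun y => x - y) ⁻¹' T)) := by
    intro x
    rw [image_sub_eq_preimage]
    refine measure_congr (Filter.EventuallyEq.inter hae ?_)
    have hd1 : volume ((fun y => x - y) ⁻¹' (S \ T)) = 0 :=
      volume_preimage_sub_null x (ae_le_set.mp hae.le)
    have hd2 : volume ((fun y => x - y) ⁻¹' (T \ S)) = 0 :=
      volume_preimage_sub_null x (ae_le_set.mp hae.symm.le)
    rw [Filter.eventuallyEq_set, ae_iff]
    refine measure_mono_null ?_ (measure_union_null hd1 hd2)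
    intro y hy
    simp only [mem_preimage, mem_union, mem_diff, mem_setOf_eq] at hy ⊢
    tauto
  have hmeas : Measurable fun x => volume (T ∩ ((fun y => x - y) ⁻¹' T)) := by
    have heq : ∀ x, volume (T ∩ ((fun y => x - y) ⁻¹' T)) =
        ∫⁻ y, T.indicator 1 y * T.indicator (1 : EuclideanSpace ℝ (Fin n) → ENNReal) (x - y) := by
      intro x
      have hms : MeasurableSet (T ∩ ((fun y => x - y) ⁻¹' T)) :=
        hTm.inter (hTm.preimage (measurable_const.sub measurable_id))
      rw [← lintegral_indicator_one hms]
      refine lintegral_congr fun y => ?_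
      by_cases h1 : y ∈ T <;> by_cases h2 : x - y ∈ T <;>
        simp [Set.indicator_apply, h1, h2, Set.mem_preimage]
    simp_rw [heq]
    apply Measurable.lintegral_prod_right'
      (f := fun p : (EuclideanSpace ℝ (Fin n)) × (EuclideanSpace ℝ (Fin n)) =>
        T.indicator 1 p.2 * T.indicator 1 (p.1 - p.2))
    exact ((measurable_one.indicator hTm).comp measurable_snd).mul
      ((measurable_one.indicator hTm).comp (measurable_fst.sub measurable_snd))
  unfold omegaSet
  simp_rw [hkey]
  exact hmeas.ennreal_toReal

lemma omegaSet_inter_pos {Ω A : Set (EuclideanSpace ℝ (Fin n))} (hconv : Convex ℝ Ω)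
    (hbd : IsBounded Ω) (hA : IsOpen A) (x : EuclideanSpace ℝ (Fin n))
    (hpos : 0 < omegaSet Ω x) (hx : (2⁻¹ : ℝ) • x ∈ A) : 0 < omegaSet (Ω ∩ A) x := by
  have hΩfin : volume (Ω ∩ ((fun y => x - y) '' Ω)) < ⊤ :=
    lt_of_le_of_lt (measure_mono inter_subset_left) hbd.measure_lt_top
  have hvol : volume (Ω ∩ ((fun y => x - y) '' Ω)) ≠ 0 := by
    intro h0
    rw [omegaSet, h0] at hpos
    simp at hpos
  -- the bad set
  set Z : Set (EuclideanSpace ℝ (Fin n)) :=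
    (Ω \ interior Ω) ∪ ((fun y => x - y) '' (Ω \ interior Ω)) with hZ
  have hZ0 : volume Z = 0 := by
    have hfr : volume (Ω \ interior Ω) = 0 := by
      refine measure_mono_null ?_ (hconv.addHaar_frontier volume)
      exact fun y hy => ⟨subset_closure hy.1, hy.2⟩
    exact measure_union_null hfr (volume_image_sub_null x hfr)
  have hgood : ((Ω ∩ ((fun y => x - y) '' Ω)) \ Z).Nonempty := by
    refine nonempty_of_measure_ne_zero (μ := volume) ?_
    intro h0
    apply hvol
    have : volume (Ω ∩ ((fun y => x - y) '' Ω)) ≤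
        volume ((Ω ∩ ((fun y => x - y) '' Ω)) \ Z) + volume Z :=
      (measure_mono (by intro y hy; by_cases h : y ∈ Z; exacts [Or.inr h, Or.inl ⟨hy, h⟩])).trans
        (measure_union_le _ _)
    rw [h0, hZ0] at this
    simpa using this
  obtain ⟨a, ⟨haΩ, haim⟩, haZ⟩ := hgood
  have haint : a ∈ interior Ω := by
    by_contra h
    exact haZ (Or.inl ⟨haΩ, h⟩)
  obtain ⟨b, hbΩ, hba⟩ := haim
  have hbint : b ∈ interior Ω := by
    by_contra h
    exact haZ (Or.inr ⟨b, ⟨hbΩ, h⟩, hba⟩)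
  have hxa : x - a = b := by rw [← hba]; simp only []; abel
  -- midpoint
  set c : EuclideanSpace ℝ (Fin n) := (2⁻¹ : ℝ) • x with hc
  have hcint : c ∈ interior Ω := by
    have := Convex.interior hconv haint hbint (by norm_num : (0:ℝ) ≤ 2⁻¹)
      (by norm_num : (0:ℝ) ≤ 2⁻¹) (by norm_num)
    have heq : (2⁻¹ : ℝ) • a + (2⁻¹ : ℝ) • b = c := by
      rw [hc, ← hxa]; module
    rwa [heq] at this
  obtain ⟨ε, hε, hball⟩ := Metric.mem_nhds_iff.mp
    ((isOpen_interior.inter hA).mem_nhds ⟨hcint, hx⟩)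
  have hsub : Metric.ball c ε ⊆ (Ω ∩ A) ∩ ((fun y => x - y) '' (Ω ∩ A)) := by
    intro y hy
    have hy1 := hball hy
    have hxy : x - y ∈ Metric.ball c ε := by
      have hxyc : x - y - c = c - y := by rw [hc]; module
      have : dist (x - y) c = dist y c := by
        rw [dist_eq_norm, dist_eq_norm, hxyc]
        rw [show c - y = -(y - c) by abel, norm_neg]
      rw [Metric.mem_ball, this]
      exact hy
    have hy2 := hball hxy
    exact ⟨⟨interior_subset hy1.1, hy1.2⟩,
      ⟨x - y, ⟨interior_subset hy2.1, hy2.2⟩, sub_sub_cancel x y⟩⟩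
  have hfin : volume ((Ω ∩ A) ∩ ((fun y => x - y) '' (Ω ∩ A))) < ⊤ :=
    lt_of_le_of_lt (measure_mono (inter_subset_left.trans inter_subset_left))
      hbd.measure_lt_top
  have hpos' : 0 < volume ((Ω ∩ A) ∩ ((fun y => x - y) '' (Ω ∩ A))) :=
    lt_of_lt_of_le (Metric.measure_ball_pos volume c hε) (measure_mono hsub)
  exact ENNReal.toReal_pos hpos'.ne' hfin.ne

set_option maxHeartbeats 1000000 in
/-- If a bounded convex `Ω` is covered by finitely many open bounded sets `A j`
such that Hardy's inequality holds for each `Ω ∩ A j`, then Hardy's inequality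
holds for `Ω`. -/
theorem stmt_9 {n : ℕ} (Ω : Set (EuclideanSpace ℝ (Fin n)))
    (hconv : Convex ℝ Ω) (hbd : Bornology.IsBounded Ω)
    (N : ℕ) (A : Fin N → Set (EuclideanSpace ℝ (Fin n)))
    (hopen : ∀ j, IsOpen (A j)) (hAbd : ∀ j, Bornology.IsBounded (A j))
    (hcover : closure Ω ⊆ ⋃ j, A j)
    (hHardy : ∀ j, ∃ C : ℝ, 0 < C ∧ HardyWith (Ω ∩ A j) C) :
    ∃ C : ℝ, 0 < C ∧ HardyWith Ω C := by
  classical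
  choose Cj hCjpos hCj using hHardy
  -- the cover of the closure of 2Ω by the open sets 2 • A j
  have hccompact : IsCompact (closure Ω) :=
    Metric.isCompact_of_isClosed_isBounded isClosed_closure hbd.closure
  have h2closed : IsClosed ((2:ℝ) • closure Ω) := by
    have := hccompact.image (continuous_const_smul (2:ℝ))
    rw [Set.image_smul] at this
    exact this.isClosed
  have hcover2 : closure ((2:ℝ) • Ω) ⊆ ⋃ j, (2:ℝ) • A j := by
    refine (closure_minimal (smul_set_mono subset_closure) h2closed).trans ?_
    intro x hx
    obtain ⟨y, hy, rfl⟩ := hx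
    obtain ⟨j, hj⟩ := mem_iUnion.mp (hcover hy)
    exact mem_iUnion.mpr ⟨j, smul_mem_smul_set hj⟩
  -- smooth partition of unity
  obtain ⟨ρ, hρ⟩ := SmoothPartitionOfUnity.exists_isSubordinate (𝓘(ℝ, EuclideanSpace ℝ (Fin n)))
    (isClosed_closure (s := (2:ℝ) • Ω)) (fun j => (2:ℝ) • A j)
    (fun j => (hopen j).smul₀ two_ne_zero) hcover2
  have hρsmooth : ∀ j, ContDiff ℝ ((⊤ : ℕ∞) : WithTop ℕ∞) (ρ j) := fun j =>
    contMDiff_iff_contDiff.mp (ρ j).contMDiff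
  have hρsupp : ∀ j, tsupport (ρ j) ⊆ (2:ℝ) • A j := hρ
  have hρcs : ∀ j, HasCompactSupport (ρ j) := fun j =>
    Metric.isCompact_of_isClosed_isBounded (isClosed_tsupport _)
      (((hAbd j).smul₀ (2:ℝ)).subset (hρsupp j))
  -- Schwartz functions
  set Φ : Fin N → SchwartzMap (EuclideanSpace ℝ (Fin n)) ℂ := fun j => schwartzOfCompact (fun x => ((ρ j x : ℝ) : ℂ))
    (Complex.ofRealCLM.contDiff.comp (hρsmooth j))
    ((hρcs j).comp_left Complex.ofReal_zero) with hΦ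
  have hΦapp : ∀ j x, Φ j x = ((ρ j x : ℝ) : ℂ) := fun j x => schwartzOfCompact_apply _ _ _ x
  set ψ : Fin N → SchwartzMap (EuclideanSpace ℝ (Fin n)) ℂ := fun j => (FourierTransform.fourierCLE ℂ (SchwartzMap (EuclideanSpace ℝ (Fin n)) ℂ)).symm (Φ j)
    with hψ
  have h𝓕ψ : ∀ j, 𝓕 ⇑(ψ j) = ⇑(Φ j) := by
    intro j
    rw [← SchwartzMap.fourier_coe, ← FourierTransform.fourierCLE_apply (R := ℂ) (ψ j), hψ]
    simp only [ContinuousLinearEquiv.apply_symm_apply]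
  have hψint : ∀ j, Integrable (⇑(ψ j)) := fun j => (ψ j).integrable
  -- the constant
  have hsum0 : 0 ≤ ∑ j, Cj j * ∫ t, ‖ψ j t‖ :=
    Finset.sum_nonneg fun j _ => mul_nonneg (hCjpos j).le (integral_nonneg fun t => norm_nonneg _)
  refine ⟨1 + ∑ j, Cj j * ∫ t, ‖ψ j t‖, by linarith, ?_⟩
  intro f hf hvanish
  set g : Fin N → (EuclideanSpace ℝ (Fin n)) → ℂ :=
    fun j => (⇑(ψ j)) ⋆[ContinuousLinearMap.mul ℂ ℂ] f with hg
  have hgint : ∀ j, Integrable (g j) := fun j =>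
    Integrable.integrable_convolution (ContinuousLinearMap.mul ℂ ℂ) (hψint j) hf
  have h𝓕g : ∀ j x, 𝓕 (g j) x = ((ρ j x : ℝ) : ℂ) * 𝓕 f x := by
    intro j x
    simp only [hg]
    rw [fourier_convolution _ _ (hψint j) hf x, h𝓕ψ j, hΦapp]
  set S : Fin N → Set (EuclideanSpace ℝ (Fin n)) := fun j => Ω ∩ A j with hS
  set B : Fin N → Set (EuclideanSpace ℝ (Fin n)) := fun j => (2:ℝ) • S j with hB
  have hBeq : ∀ j, B j = ((2:ℝ) • Ω) ∩ ((2:ℝ) • A j) := fun j => smul_set_inter₀ two_ne_zero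
  have hSnm : ∀ j, NullMeasurableSet (S j) volume := fun j =>
    (hconv.nullMeasurableSet volume).inter (hopen j).measurableSet.nullMeasurableSet
  have hΩnm : NullMeasurableSet ((2:ℝ) • Ω) volume :=
    ((hconv.smul (2:ℝ)).nullMeasurableSet volume)
  have hBnm : ∀ j, NullMeasurableSet (B j) volume := fun j => by
    rw [hBeq j]
    exact ((hconv.smul (2:ℝ)).nullMeasurableSet volume).inter
      ((hopen j).smul₀ two_ne_zero).measurableSet.nullMeasurableSet
  have hgvan : ∀ j, ∀ x ∉ B j, 𝓕 (g j) x = 0 := by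
    intro j x hx
    rw [h𝓕g j x]
    by_cases hxA : x ∈ (2:ℝ) • A j
    · have hxΩ : x ∉ (2:ℝ) • Ω := by
        intro h
        exact hx (by rw [hBeq j]; exact ⟨h, hxA⟩)
      rw [hvanish x hxΩ, mul_zero]
    · have hz : ρ j x = 0 := image_eq_zero_of_notMem_tsupport fun h => hxA (hρsupp j h)
      rw [hz]
      simp
  set H : Fin N → (EuclideanSpace ℝ (Fin n)) → ENNReal :=
    fun j x => ENNReal.ofReal (‖𝓕 (g j) x‖ / omegaSet (S j) x) with hH
  have h𝓕gcont : ∀ j, Continuous (𝓕 (g j)) := fun j =>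
    VectorFourier.fourierIntegral_continuous Real.continuous_fourierChar
      continuous_inner (hgint j)
  have hHmeas : ∀ j, Measurable (H j) := fun j =>
    (((h𝓕gcont j).measurable.norm).div (measurable_omegaSet (hSnm j))).ennreal_ofReal
  have hpoint : ∀ x ∈ (2:ℝ) • Ω,
      ENNReal.ofReal (‖𝓕 f x‖ / omegaSet Ω x) ≤ ∑ j, H j x := by
    intro x hx
    rcases eq_or_lt_of_le (show (0:ℝ) ≤ omegaSet Ω x from ENNReal.toReal_nonneg) with hω | hω
    · rw [← hω, div_zero]
      simp
    · have hsum1 : (∑ j, ((ρ j x : ℝ) : ℂ)) = 1 := by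
        have h1 := ρ.sum_eq_one (subset_closure hx)
        rw [finsum_eq_sum_of_fintype] at h1
        exact_mod_cast congrArg Complex.ofReal h1
      have hfsum : 𝓕 f x = ∑ j, 𝓕 (g j) x := by
        simp_rw [h𝓕g, ← Finset.sum_mul, hsum1, one_mul]
      have hterm : ∀ j, ‖𝓕 (g j) x‖ / omegaSet Ω x ≤ ‖𝓕 (g j) x‖ / omegaSet (S j) x := by
        intro j
        by_cases hz : 𝓕 (g j) x = 0
        · rw [hz]; simp
        · have hρx : ρ j x ≠ 0 := by
            intro h0
            apply hz
            rw [h𝓕g j x, h0]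
            simp
          have hxsupp : x ∈ (2:ℝ) • A j := hρsupp j (subset_tsupport _ hρx)
          obtain ⟨a, ha, rfl⟩ := hxsupp
          have hxA : (2⁻¹ : ℝ) • ((2:ℝ) • a) ∈ A j := by
            rw [inv_smul_smul₀ two_ne_zero]
            exact ha
          have hpos := omegaSet_inter_pos hconv hbd (hopen j) _ hω hxA
          exact div_le_div_of_nonneg_left (norm_nonneg _) hpos
            (omegaSet_mono inter_subset_left hbd _)
      have hnum : ‖𝓕 f x‖ ≤ ∑ j, ‖𝓕 (g j) x‖ := by
        rw [hfsum]
        exact norm_sum_le _ _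
      have h1 : ‖𝓕 f x‖ / omegaSet Ω x ≤ ∑ j, ‖𝓕 (g j) x‖ / omegaSet (S j) x :=
        calc ‖𝓕 f x‖ / omegaSet Ω x ≤ (∑ j, ‖𝓕 (g j) x‖) / omegaSet Ω x :=
              div_le_div_of_nonneg_right hnum hω.le
          _ = ∑ j, ‖𝓕 (g j) x‖ / omegaSet Ω x := Finset.sum_div _ _ _
          _ ≤ ∑ j, ‖𝓕 (g j) x‖ / omegaSet (S j) x :=
              Finset.sum_le_sum fun j _ => hterm j
      calc ENNReal.ofReal (‖𝓕 f x‖ / omegaSet Ω x)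
          ≤ ENNReal.ofReal (∑ j, ‖𝓕 (g j) x‖ / omegaSet (S j) x) :=
            ENNReal.ofReal_le_ofReal h1
        _ = ∑ j, ENNReal.ofReal (‖𝓕 (g j) x‖ / omegaSet (S j) x) :=
            ENNReal.ofReal_sum_of_nonneg fun j _ =>
              div_nonneg (norm_nonneg _) ENNReal.toReal_nonneg
        _ = ∑ j, H j x := rfl
  have hHsupp : ∀ j, ∀ x, H j x = (B j).indicator (H j) x := by
    intro j x
    by_cases hx : x ∈ B j
    · rw [Set.indicator_of_mem hx]
    · rw [Set.indicator_of_notMem hx, hH]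
      simp only
      rw [hgvan j x hx]
      simp
  calc ∫⁻ x in (2:ℝ) • Ω, ENNReal.ofReal (‖𝓕 f x‖ / omegaSet Ω x)
      ≤ ∫⁻ x in (2:ℝ) • Ω, ∑ j, H j x := by
        refine lintegral_mono_ae ?_
        filter_upwards [ae_restrict_mem₀ hΩnm] with x hx
        exact hpoint x hx
    _ ≤ ∫⁻ x, ∑ j, H j x := lintegral_mono' Measure.restrict_le_self le_rfl
    _ = ∑ j, ∫⁻ x, H j x := lintegral_finset_sum' _ fun j _ => (hHmeas j).aemeasurable
    _ = ∑ j, ∫⁻ x in B j, H j x := by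
        refine Finset.sum_congr rfl fun j _ => ?_
        rw [← lintegral_indicator₀ (hBnm j)]
        exact lintegral_congr (hHsupp j)
    _ ≤ ∑ j, ENNReal.ofReal (Cj j * ∫ t, ‖g j t‖) :=
        Finset.sum_le_sum fun j _ => hCj j (g j) (hgint j) (hgvan j)
    _ ≤ ENNReal.ofReal ((1 + ∑ j, Cj j * ∫ t, ‖ψ j t‖) * ∫ t, ‖f t‖) := by
        have hstep : ∀ j, Cj j * ∫ t, ‖g j t‖ ≤ (Cj j * ∫ t, ‖ψ j t‖) * ∫ t, ‖f t‖ := by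
          intro j
          rw [mul_assoc]
          exact mul_le_mul_of_nonneg_left (convolution_L1_le _ f (hψint j) hf) (hCjpos j).le
        calc ∑ j, ENNReal.ofReal (Cj j * ∫ t, ‖g j t‖)
            ≤ ∑ j, ENNReal.ofReal ((Cj j * ∫ t, ‖ψ j t‖) * ∫ t, ‖f t‖) :=
              Finset.sum_le_sum fun j _ => ENNReal.ofReal_le_ofReal (hstep j)
          _ = ENNReal.ofReal (∑ j, (Cj j * ∫ t, ‖ψ j t‖) * ∫ t, ‖f t‖) :=
              (ENNReal.ofReal_sum_of_nonneg fun j _ => mul_nonneg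
                (mul_nonneg (hCjpos j).le (integral_nonneg fun t => norm_nonneg _))
                (integral_nonneg fun t => norm_nonneg _)).symm
          _ ≤ ENNReal.ofReal ((1 + ∑ j, Cj j * ∫ t, ‖ψ j t‖) * ∫ t, ‖f t‖) := by
              refine ENNReal.ofReal_le_ofReal ?_
              rw [← Finset.sum_mul]
              exact mul_le_mul_of_nonneg_right (by linarith)
                (integral_nonneg fun t => norm_nonneg _)
end

section
/- Fix $n \ge 2$. There exist constants $C > 0$ and $\varepsilon_0 > 0$ such that for every $\varepsilon \in (0, \varepsilon_0)$ and every $x \in \mathbb{R}^n$ with $|x| = 1$, one has $\big(2\,\overline{B}((1 - C\varepsilon^2)x,\, C\varepsilon^2) - B(0,1)\big) \cap B(0,1) \subseteq B(x, \varepsilon)$, where $2K - B = \{2a - b : a \in K,\ b \in B\}$. -/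
open MeasureTheory
open scoped Pointwise

set_option maxHeartbeats 1000000

/-- For the unit ball in `ℝⁿ`, `n ≥ 2`:
`(2 B̄((1-Cε²)x, Cε²) - B(0,1)) ∩ B(0,1) ⊆ B(x, ε)` for all unit vectors `x` and
all small `ε`. -/
theorem stmt_12 (n : ℕ) (hn : 2 ≤ n) :
    ∃ C : ℝ, 0 < C ∧ ∃ ε₀ : ℝ, 0 < ε₀ ∧
      ∀ ε ∈ Set.Ioo (0 : ℝ) ε₀, ∀ x : EuclideanSpace ℝ (Fin n), ‖x‖ = 1 →
        ((2 : ℝ) • Metric.closedBall ((1 - C * ε ^ 2) • x) (C * ε ^ 2) -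
            Metric.ball (0 : EuclideanSpace ℝ (Fin n)) 1) ∩
          Metric.ball (0 : EuclideanSpace ℝ (Fin n)) 1 ⊆ Metric.ball x ε := by
  refine ⟨1/100, by norm_num, 1, by norm_num, ?_⟩
  rintro ε ⟨hε0, hε1⟩ x hx z ⟨hz1, hz2⟩
  rw [Set.mem_sub] at hz1
  obtain ⟨p, hp, b, hb, hpz⟩ := hz1
  obtain ⟨a, ha, rfl⟩ := hp
  set r : ℝ := (1/100 : ℝ) * ε ^ 2 with hrdef
  have hr0 : 0 < r := by positivity
  have hrsmall : r < 1/100 := by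
    rw [hrdef]; nlinarith
  rw [Metric.mem_closedBall, dist_eq_norm] at ha
  rw [Metric.mem_ball, dist_zero_right] at hb
  rw [Metric.mem_ball, dist_zero_right] at hz2
  rw [Metric.mem_ball, dist_eq_norm]
  -- z = 2a - b
  have hz : z = (2:ℝ) • a - b := by rw [← hpz]
  have hcx : ‖(1 - r) • x‖ = 1 - r := by
    rw [norm_smul, hx, mul_one, Real.norm_eq_abs, abs_of_pos (by linarith)]
  have ha1 : 1 - 2*r ≤ ‖a‖ := by
    have := norm_sub_norm_le a ((1 - r) • x)
    calc 1 - 2*r = (1 - r) - r := by ring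
    _ ≤ ‖(1 - r) • x‖ - ‖a - (1 - r) • x‖ := by rw [hcx]; linarith
    _ ≤ ‖a‖ := by
        have := norm_sub_norm_le ((1 - r) • x) a
        rw [← norm_neg ((1-r) • x - a), neg_sub] at this
        linarith
  -- parallelogram law on z, b
  have hpar := parallelogram_law_with_norm ℝ z b
  have hzb : z + b = (2:ℝ) • a := by rw [hz]; abel
  have hzb' : z - b = (2:ℝ) • (a - b) := by rw [hz]; module
  rw [hzb, hzb'] at hpar
  have h2a : ‖(2:ℝ) • a‖ = 2 * ‖a‖ := by
    rw [norm_smul, Real.norm_eq_abs]; norm_num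
  have h2ab : ‖(2:ℝ) • (a - b)‖ = 2 * ‖a - b‖ := by
    rw [norm_smul, Real.norm_eq_abs]; norm_num
  rw [h2a, h2ab] at hpar
  have hab2 : ‖a - b‖ * ‖a - b‖ < 4 * r := by nlinarith [norm_nonneg b, norm_nonneg z]
  have hab : ‖a - b‖ < ε / 5 := by
    nlinarith [norm_nonneg (a - b), hrdef]
  have hdecomp : z - x = (a - b) + (a - (1 - r) • x) - r • x := by
    rw [hz]; module
  calc ‖z - x‖ ≤ ‖(a - b) + (a - (1 - r) • x)‖ + ‖r • x‖ := by
        rw [hdecomp]; exact norm_sub_le _ _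
    _ ≤ ‖a - b‖ + ‖a - (1 - r) • x‖ + ‖r • x‖ := by
        have := norm_add_le (a - b) (a - (1 - r) • x); linarith
    _ < ε := by
        rw [norm_smul, hx, mul_one, Real.norm_eq_abs, abs_of_pos hr0]
        have hee : ε^2 ≤ ε := by nlinarith
        have : r ≤ ε / 100 := by rw [hrdef]; linarith
        linarith
end
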